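/- arXiv:1410.4336 — 7 statements merged into one kernel-verified Lean document; each statement's English description precedes it below -/
import Mathlib

section
/- The map f : Z/(n+k) → Z/n given by f(i) = i mod n is a simplicial map from the clique complex of the 1-skeleton of N(n+k,k) to N(n,k): the image of any face of the clique complex Cl(N(n+k,k)^(1)) under f is a face of N(n,k). -/
/-!
Let `a ∈ σ` have the least representative `a.val ∈ [0, n+k)`. Every `x ∈ σ` lies at cyclic
distance at most `k` from `a`, so either `x.val - a.val ≤ k`, or the short way from `a` to `x`
wraps around `0`, which forces `x.val - a.val ≥ n` and `x.val - a.val - n ≤ k`. As `n = 0` in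
`ℤ/n`, in both cases `x.val mod n` lies in the arc `[a.val, a.val + k]ₙ`.
-/

/-- The discrete circular arc `[i, i+k]ₙ ⊆ ℤ/n`. -/
def cyclicArc (n k : ℕ) (i : ZMod n) : Finset (ZMod n) :=
  (Finset.range (k + 1)).image (fun j : ℕ => i + (j : ZMod n))

/-- `σ` is a face of the nerve complex `N(n,k)`: it is contained in some cyclic
interval `[i, i+k]ₙ`. -/
def IsFaceN (n k : ℕ) (σ : Finset (ZMod n)) : Prop :=
  ∃ i : ZMod n, σ ⊆ cyclicArc n k i

theorem mem_cyclicArc {m k : ℕ} {i x : ZMod m} :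
    x ∈ cyclicArc m k i ↔ ∃ j ≤ k, i + j = x := by
  simp [cyclicArc]

theorem mem_cyclicArc_iff_val_sub_le {m k : ℕ} [NeZero m] {i x : ZMod m} :
    x ∈ cyclicArc m k i ↔ (x - i).val ≤ k := by
  rw [mem_cyclicArc]
  constructor
  · rintro ⟨j, hj, rfl⟩
    rw [add_sub_cancel_left, ZMod.val_natCast]
    exact (Nat.mod_le j m).trans hj
  · exact fun h => ⟨(x - i).val, h, by rw [ZMod.natCast_zmod_val, add_sub_cancel]⟩

theorem val_sub_le_or_val_sub_le_of_mem_cyclicArc {m k : ℕ} [NeZero m] {i a b : ZMod m}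
    (ha : a ∈ cyclicArc m k i) (hb : b ∈ cyclicArc m k i) :
    (b - a).val ≤ k ∨ (a - b).val ≤ k := by
  rw [mem_cyclicArc_iff_val_sub_le] at ha hb
  have hba : b - a = (b - i) - (a - i) := by abel
  have hab : a - b = (a - i) - (b - i) := by abel
  rcases le_total (a - i).val (b - i).val with h | h
  · left; rw [hba, ZMod.val_sub h]; omega
  · right; rw [hab, ZMod.val_sub h]; omega

theorem natCast_val_mem_cyclicArc_of_val_le {n k : ℕ} [NeZero (n + k)] {a x : ZMod (n + k)}
    (hax : a.val ≤ x.val) (hclose : (x - a).val ≤ k ∨ (a - x).val ≤ k) :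
    ((x.val : ℕ) : ZMod n) ∈ cyclicArc n k (a.val : ZMod n) := by
  rw [mem_cyclicArc]
  have hsub : (x - a).val = x.val - a.val := ZMod.val_sub hax
  rcases hclose with hclose | hclose
  · exact ⟨x.val - a.val, by omega, by rw [← Nat.cast_add, Nat.add_sub_cancel' hax]⟩
  · by_cases hxa : x = a
    · exact ⟨0, Nat.zero_le k, by rw [hxa, Nat.cast_zero, add_zero]⟩
    have hwrap : n + k - (x.val - a.val) ≤ k := by
      rwa [← neg_sub, ZMod.neg_val, if_neg (sub_ne_zero.2 hxa), hsub] at hclose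
    obtain ⟨j, hj⟩ := Nat.exists_eq_add_of_le (show a.val + n ≤ x.val by omega)
    refine ⟨j, by have := x.val_lt; omega, ?_⟩
    rw [hj, Nat.cast_add, Nat.cast_add, ZMod.natCast_self, add_zero]

/-- reduction mod `n` is a simplicial map from the clique complex of the
1-skeleton of `N(n+k,k)` to `N(n,k)`: the image of any face of `Cl(N(n+k,k)⁽¹⁾)`
(a set of vertices pairwise lying on a common cyclic interval of length `k+1`)
is a face of `N(n,k)`. -/
theorem cliqueToNerve_simplicial (n k : ℕ) [NeZero n] (σ : Finset (ZMod (n + k)))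
    (hσ : ∀ a ∈ σ, ∀ b ∈ σ, ∃ i : ZMod (n + k),
      a ∈ cyclicArc (n + k) k i ∧ b ∈ cyclicArc (n + k) k i) :
    IsFaceN n k (σ.image (fun x : ZMod (n + k) => ((x.val : ℕ) : ZMod n))) := by
  have : NeZero (n + k) := ⟨by have := NeZero.ne n; omega⟩
  rcases σ.eq_empty_or_nonempty with rfl | hne
  · exact ⟨0, by simp⟩
  obtain ⟨a, ha, hmin⟩ := σ.exists_min_image ZMod.val hne
  refine ⟨a.val, Finset.image_subset_iff.2 fun x hx => ?_⟩
  obtain ⟨i, hai, hxi⟩ := hσ a ha x hx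
  exact natCast_val_mem_cyclicArc_of_val_le (hmin x hx)
    (val_sub_le_or_val_sub_le_of_mem_cyclicArc hai hxi)
end

section
/- Let n ≥ 2d. In the circular complete graph K_{n/d}, the neighborhood complex N(K_{n/d}) is isomorphic as a simplicial complex to N(n, n-2d). -/
/-- The circular complete graph `K_{n/d}`: vertices `ℤ/n`, with `i ~ j` iff the cyclic
distance `|i-j|` satisfies `d ≤ |i-j| ≤ n-d` (stated symmetrically via both `(i-j).val`
and `(j-i).val`, which is equivalent). -/
def circGraph (n d : ℕ) : SimpleGraph (ZMod n) where
  Adj i j := i ≠ j ∧ (d ≤ (i - j).val ∧ (i - j).val ≤ n - d)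
    ∧ (d ≤ (j - i).val ∧ (j - i).val ≤ n - d)
  symm := by
    constructor
    intro i j h
    exact ⟨h.1.symm, h.2.2, h.2.1⟩
  loopless := by
    constructor
    intro i h
    exact h.1 rfl

theorem mem_cyclicArc_iff {n k : ℕ} [NeZero n] (hk : k < n) {i v : ZMod n} :
    v ∈ cyclicArc n k i ↔ (v - i).val ≤ k := by
  constructor
  · intro hv
    obtain ⟨j, hj, rfl⟩ := Finset.mem_image.1 hv
    rw [Finset.mem_range] at hj
    rw [add_sub_cancel_left, ZMod.val_natCast_of_lt (by omega)]
    omega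
  · intro hv
    refine Finset.mem_image.2 ⟨(v - i).val, Finset.mem_range.2 (by omega), ?_⟩
    rw [ZMod.natCast_zmod_val, add_sub_cancel]

theorem circGraph_adj_iff {n d : ℕ} [NeZero n] (hd : 1 ≤ d) {w v : ZMod n} :
    (circGraph n d).Adj w v ↔ d ≤ (v - w).val ∧ (v - w).val ≤ n - d := by
  show w ≠ v ∧ _ ∧ _ ↔ _
  have hlt := ZMod.val_lt (v - w)
  by_cases hvw : v - w = 0
  · rw [hvw, ZMod.val_zero]
    omega
  · have hwv : (w - v).val = n - (v - w).val := by
      rw [← neg_sub, ZMod.neg_val, if_neg hvw]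
    rw [hwv]
    have hne : w ≠ v := fun h => hvw (sub_eq_zero.2 h.symm)
    simp only [ne_eq, hne, not_false_eq_true, true_and]
    omega

theorem circGraph_adj_iff_mem_cyclicArc {n d : ℕ} [NeZero n] (hd : 1 ≤ d) (hn : 2 * d ≤ n)
    {w v : ZMod n} :
    (circGraph n d).Adj w v ↔ v ∈ cyclicArc n (n - 2 * d) (w + d) := by
  have hd_val : (d : ZMod n).val = d := ZMod.val_natCast_of_lt (by omega)
  rw [circGraph_adj_iff hd, mem_cyclicArc_iff (by omega), ← sub_sub]
  constructor
  · rintro ⟨hdx, hxn⟩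
    rw [ZMod.val_sub (by omega), hd_val]
    omega
  · intro hj
    have hsplit : v - w = (v - w - d) + d := (sub_add_cancel _ _).symm
    rw [hsplit, ZMod.val_add_of_lt (by omega), hd_val]
    omega

/-- for `n ≥ 2d` (with `d ≥ 1`), the neighborhood complex of the circular
complete graph `K_{n/d}` (faces: vertex sets with a common neighbor) is isomorphic,
as a simplicial complex, to `N(n, n-2d)`. -/
theorem neighborhoodComplex_iso_nerve (n d : ℕ) [NeZero n] (hd : 1 ≤ d) (hn : 2 * d ≤ n) :
    ∃ e : ZMod n ≃ ZMod n, ∀ σ : Finset (ZMod n),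
      (∃ w : ZMod n, ∀ v ∈ σ, (circGraph n d).Adj w v) ↔
        IsFaceN n (n - 2 * d) (σ.image e) := by
  refine ⟨Equiv.refl _, fun σ => ?_⟩
  simp only [Equiv.coe_refl, Finset.image_id, IsFaceN, Finset.subset_iff,
    circGraph_adj_iff_mem_cyclicArc hd hn]
  constructor
  · rintro ⟨w, hw⟩
    exact ⟨w + d, hw⟩
  · rintro ⟨i, hi⟩
    exact ⟨i - d, by simpa only [sub_add_cancel] using hi⟩
end

section
/- Suppose l/(l+1) < k/n and n ≥ 2l+3. Then every maximal simplex of the boundary of the cyclic polytope C_{2l+2}(n) (characterized by Gale's evenness condition as a disjoint union of l+1 cyclic blocks of two consecutive elements of Z/n) is a face of N(n,k). -/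
/-! Choose the start `i` of the arc `[i, i+k]` so that every block `{a, a+1}` lies in it; this holds
as soon as `(a - i).val < k`. For each block exactly `n - k` starts `i` fail this, so by the union
bound at most `(l+1)(n-k)` starts are bad, and `l n < k (l+1)` forces this below `n`. -/

open Finset

namespace ZMod

variable {n : ℕ} [NeZero n]

theorem card_filter_le_val (k : ℕ) : #{u : ZMod n | k ≤ u.val} = n - k := by
  rw [← Nat.card_Ico k n, ← card_image_of_injective _ (val_injective n)]
  congr 1
  ext m
  simp only [mem_image, mem_filter, mem_univ, true_and, mem_Ico]
  constructor
  · rintro ⟨u, hu, rfl⟩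
    exact ⟨hu, val_lt u⟩
  · rintro ⟨hkm, hmn⟩
    exact ⟨m, by rwa [val_cast_of_lt hmn], val_cast_of_lt hmn⟩

theorem card_filter_le_val_sub (k : ℕ) (a : ZMod n) : #{i : ZMod n | k ≤ (a - i).val} = n - k := by
  rw [← card_filter_le_val k]
  exact card_nbij' (a - ·) (a - ·) (by simp [Set.MapsTo]) (by simp [Set.MapsTo])
    (by simp [Set.LeftInvOn]) (by simp [Set.LeftInvOn])

theorem exists_forall_val_sub_lt {ι : Type*} [Fintype ι] (k : ℕ) (g : ι → ZMod n)
    (h : Fintype.card ι * (n - k) < n) : ∃ i : ZMod n, ∀ t, (g t - i).val < k := by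
  have hbad : #(univ.biUnion fun t => ({i | k ≤ (g t - i).val} : Finset (ZMod n)))
      < #(univ : Finset (ZMod n)) :=
    calc _ ≤ ∑ t, #({i | k ≤ (g t - i).val} : Finset (ZMod n)) := card_biUnion_le
      _ = Fintype.card ι * (n - k) := by simp [card_filter_le_val_sub]
      _ < #univ := by rwa [card_univ, card]
  obtain ⟨i, -, hi⟩ := exists_mem_notMem_of_card_lt_card hbad
  exact ⟨i, fun t => Nat.lt_of_not_le fun hle => hi (mem_biUnion.2 ⟨t, mem_univ _, by simpa⟩)⟩

end ZMod

theorem mem_cyclicArc_of_val_sub_le {n k : ℕ} [NeZero n] {i j : ZMod n} (h : (j - i).val ≤ k) :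
    j ∈ cyclicArc n k i :=
  mem_image.2 ⟨(j - i).val, mem_range.2 (Nat.lt_succ_of_le h), by simp⟩

theorem pair_subset_cyclicArc_of_val_sub_lt {n k : ℕ} [NeZero n] {i a : ZMod n}
    (h : (a - i).val < k) : {a, a + 1} ⊆ cyclicArc n k i := by
  have hsucc : (a + 1 - i).val ≤ (a - i).val + 1 := by
    rw [add_sub_right_comm]
    exact (ZMod.val_add_le _ _).trans
      (by gcongr; exact (ZMod.val_one_eq_one_mod n).trans_le (Nat.mod_le 1 n))
  simp only [insert_subset_iff, singleton_subset_iff]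
  exact ⟨mem_cyclicArc_of_val_sub_le h.le, mem_cyclicArc_of_val_sub_le (by omega)⟩

theorem cyclicPolytope_facet_mem_nerve_general (n k l : ℕ) [NeZero n]
    (hfrac : l * n < k * (l + 1))
    (σ : Finset (ZMod n)) (g : Fin (l + 1) → ZMod n)
    (hσ : σ = Finset.univ.biUnion (fun i : Fin (l + 1) => ({g i, g i + 1} : Finset (ZMod n)))) :
    IsFaceN n k σ := by
  have hcount : Fintype.card (Fin (l + 1)) * (n - k) < n := by
    have := NeZero.pos n
    rw [Fintype.card_fin, Nat.mul_sub, add_one_mul, mul_comm (l + 1) k]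
    omega
  obtain ⟨i, hi⟩ := ZMod.exists_forall_val_sub_lt k g hcount
  subst hσ
  exact ⟨i, biUnion_subset.2 fun t _ => pair_subset_cyclicArc_of_val_sub_lt (hi t)⟩

/-- if `l/(l+1) < k/n` and `n ≥ 2l+3`, then every maximal simplex of
`∂C_{2l+2}(n)` — by Gale's evenness condition, a disjoint union of `l+1` pairwise
disjoint cyclic blocks `{i, i+1} ⊆ ℤ/n` — is a face of `N(n,k)`. -/
theorem cyclicPolytope_facet_mem_nerve (n k l : ℕ) [NeZero n]
    (hfrac : l * n < k * (l + 1)) (hn : 2 * l + 3 ≤ n)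
    (σ : Finset (ZMod n)) (g : Fin (l + 1) → ZMod n)
    (hdisj : ∀ i j : Fin (l + 1), i ≠ j →
      Disjoint ({g i, g i + 1} : Finset (ZMod n)) ({g j, g j + 1} : Finset (ZMod n)))
    (hσ : σ = Finset.univ.biUnion (fun i : Fin (l + 1) => ({g i, g i + 1} : Finset (ZMod n)))) :
    IsFaceN n k σ :=
  cyclicPolytope_facet_mem_nerve_general n k l hfrac σ g hσ
end

section
/- Suppose a subset σ of Z/n of size 2(l+1) is a disjoint union of l+1 pairwise disjoint cyclic blocks {i, i+1 mod n}, and suppose l/(l+1) < k/n with n ≥ 2l+3. Then some gap between two cyclically consecutive blocks of σ contains at least n-k-1 elements. -/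
/-!
If no gap had `n - k - 1` elements, every `x ∉ σ` would lie at distance between `1` and
`n - k - 2` before the first element of a maximal run of `σ`. A run can only start at some `g i`,
so the `n - 2(l + 1)` points outside `σ` number at most `(l + 1)(n - k - 2)`, i.e.
`n ≤ (l + 1)(n - k)`, which contradicts `l / (l + 1) < k / n`.
-/

open Finset

namespace CyclicRuns

variable {G : Type*} [AddGroupWithOne G] [DecidableEq G]

def runStarts (σ : Finset G) : Finset G := {s ∈ σ | s - 1 ∉ σ}

lemma exists_add_mem_runStarts {σ : Finset G} {x : G} (hx : x ∉ σ) :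
    ∀ t : ℕ, x + t ∈ σ → ∃ u ∈ Ico 1 (t + 1), x + u ∈ runStarts σ
  | 0, h => by simp_all
  | t + 1, h => by
    by_cases ht : x + t ∈ σ
    · obtain ⟨u, hu, hmem⟩ := exists_add_mem_runStarts hx t ht
      exact ⟨u, by simp only [mem_Ico] at hu ⊢; omega, hmem⟩
    · refine ⟨t + 1, by simp, mem_filter.2 ⟨h, ?_⟩⟩
      simpa [add_sub_assoc] using ht

lemma card_le_card_add_card_runStarts_mul [Fintype G] (σ : Finset G) (m : ℕ)
    (hcover : ∀ x : G, ∃ t < m, x + t ∈ σ) :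
    Fintype.card G ≤ #σ + #(runStarts σ) * (m - 1) := by
  have hsub : (univ : Finset G) ⊆
      σ ∪ (runStarts σ).biUnion fun s => (Ico 1 m).image fun u : ℕ => s - u := by
    intro x _
    by_cases hx : x ∈ σ
    · exact mem_union_left _ hx
    obtain ⟨t, htm, ht⟩ := hcover x
    obtain ⟨u, hu, hmem⟩ := exists_add_mem_runStarts hx t ht
    refine mem_union_right _
      (mem_biUnion.2 ⟨_, hmem, mem_image.2 ⟨u, ?_, add_sub_cancel_right x _⟩⟩)
    simp only [mem_Ico] at hu ⊢
    omega
  calc Fintype.card G = #(univ : Finset G) := card_univ.symm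
    _ ≤ _ := card_le_card hsub
    _ ≤ #σ + ∑ s ∈ runStarts σ, #((Ico 1 m).image fun u : ℕ => s - u) :=
      (card_union_le _ _).trans (Nat.add_le_add_left card_biUnion_le _)
    _ ≤ #σ + ∑ _s ∈ runStarts σ, (m - 1) := by
      gcongr
      exact card_image_le.trans (by simp)
    _ = #σ + #(runStarts σ) * (m - 1) := by rw [sum_const, smul_eq_mul]

lemma card_runStarts_biUnion_le {ι : Type*} [Fintype ι] (g : ι → G) :
    #(runStarts (univ.biUnion fun i => ({g i, g i + 1} : Finset G))) ≤ Fintype.card ι := by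
  refine (card_le_card fun s hs => ?_).trans (card_image_le (s := univ) (f := g))
  simp only [runStarts, mem_filter, mem_biUnion, mem_univ, true_and, mem_insert,
    mem_singleton] at hs
  obtain ⟨⟨i, rfl | rfl⟩, hprev⟩ := hs
  · exact mem_image_of_mem g (mem_univ i)
  · exact absurd ⟨i, by simp⟩ hprev

end CyclicRuns

open CyclicRuns in
theorem gap_of_blocks_general (n k l : ℕ) [NeZero n]
    (hfrac : l * n < k * (l + 1))
    (σ : Finset (ZMod n)) (hcard : σ.card = 2 * (l + 1)) (g : Fin (l + 1) → ZMod n)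
    (hσ : σ = Finset.univ.biUnion (fun i : Fin (l + 1) => ({g i, g i + 1} : Finset (ZMod n)))) :
    ∃ j : ZMod n, ∀ t : ℕ, t < n - k - 1 → j + (t : ZMod n) ∉ σ := by
  by_contra! hcover
  have hbound := card_le_card_add_card_runStarts_mul σ (n - k - 1) hcover
  have hstarts : #(runStarts σ) ≤ l + 1 := by
    simpa [hσ] using card_runStarts_biUnion_le g
  rw [ZMod.card, hcard] at hbound
  obtain ⟨t, ht, -⟩ := hcover 0
  obtain ⟨r, rfl⟩ : ∃ r, n = k + 2 + r := ⟨n - k - 2, by omega⟩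
  rw [show k + 2 + r - k - 1 - 1 = r by omega] at hbound
  -- `n ≤ (l + 1) (r + 2) = (l + 1) (n - k)`
  nlinarith

/-- if `σ ⊆ ℤ/n` of size `2(l+1)` is a disjoint union of `l+1` pairwise
disjoint cyclic blocks `{i, i+1}`, and `l/(l+1) < k/n` with `n ≥ 2l+3`, then some gap
between two cyclically consecutive blocks contains at least `n-k-1` elements; that is,
some run of `n-k-1` cyclically consecutive elements of `ℤ/n` is disjoint from `σ`. -/
theorem gap_of_blocks (n k l : ℕ) [NeZero n]
    (hfrac : l * n < k * (l + 1)) (hn : 2 * l + 3 ≤ n)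
    (σ : Finset (ZMod n)) (hcard : σ.card = 2 * (l + 1)) (g : Fin (l + 1) → ZMod n)
    (hdisj : ∀ i j : Fin (l + 1), i ≠ j →
      Disjoint ({g i, g i + 1} : Finset (ZMod n)) ({g j, g j + 1} : Finset (ZMod n)))
    (hσ : σ = Finset.univ.biUnion (fun i : Fin (l + 1) => ({g i, g i + 1} : Finset (ZMod n)))) :
    ∃ j : ZMod n, ∀ t : ℕ, t < n - k - 1 → j + (t : ZMod n) ∉ σ :=
  gap_of_blocks_general n k l hfrac σ hcard g hσ
end

section
/- For 1 ≤ k ≤ n-3, any automorphism of the simplicial complex N(n,k) restricts to an automorphism of the cycle graph C_n on the vertex set Z/n, and hence the automorphism group of N(n,k) is isomorphic to the dihedral group of order 2n. -/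
set_option linter.unusedSectionVars false
set_option maxHeartbeats 1000000



/-- The group of simplicial automorphisms of `N(n,k)`, as a subgroup of the
permutations of the vertex set `ℤ/n`. -/
def nerveAut (n k : ℕ) : Subgroup (Equiv.Perm (ZMod n)) where
  carrier := {e | ∀ σ : Finset (ZMod n), IsFaceN n k σ ↔ IsFaceN n k (σ.image e)}
  one_mem' := by
    intro σ
    simp
  mul_mem' := by
    intro a b ha hb σ
    rw [hb σ, ha (σ.image ⇑b)]
    simp [Finset.image_image]
  inv_mem' := by
    intro a ha σ
    have h := ha (σ.image ⇑a⁻¹)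
    have h2 : (σ.image ⇑a⁻¹).image ⇑a = σ := by
      rw [Finset.image_image]
      simp [Function.comp_def]
    rw [h2] at h
    exact h.symm

section helpers
variable {n k : ℕ} [NeZero n]

lemma zmod_cast_val (x : ZMod n) : ((x.val : ℕ) : ZMod n) = x :=
  ZMod.natCast_rightInverse x

lemma val_sub_one {y : ZMod n} (hy : y ≠ 0) : (y - 1).val = y.val - 1 ∧ 1 ≤ y.val := by
  have hn1 : 1 < n := by
    rcases Nat.lt_or_ge n 2 with h | h
    · interval_cases n
      · exact absurd rfl (NeZero.ne 0)
      · exact absurd (Subsingleton.elim y 0) hy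
    · omega
  have h1 : (1 : ZMod n).val = 1 := by
    rw [← Nat.cast_one, ZMod.val_cast_of_lt hn1]
  have hy' : 1 ≤ y.val := by
    rcases Nat.eq_zero_or_pos y.val |>.symm with h | h
    · exact h
    · exfalso; apply hy
      have := zmod_cast_val y
      rw [h] at this; simpa using this.symm
  have hadd := ZMod.val_add (y - 1) 1
  rw [sub_add_cancel, h1] at hadd
  have hlt : (y - 1).val < n := ZMod.val_lt _
  constructor
  · by_cases hc : (y-1).val + 1 = n
    · rw [hc, Nat.mod_self] at hadd; omega
    · rw [Nat.mod_eq_of_lt (by omega)] at hadd; omega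
  · exact hy'

lemma mem_arc {i x : ZMod n} (hkn : k < n) :
    x ∈ cyclicArc n k i ↔ (x - i).val ≤ k := by
  simp only [cyclicArc, Finset.mem_image, Finset.mem_range]
  constructor
  · rintro ⟨j, hj, rfl⟩
    rw [add_sub_cancel_left, ZMod.val_cast_of_lt (by omega)]
    omega
  · intro h
    exact ⟨(x - i).val, by omega, by rw [zmod_cast_val]; ring⟩

lemma card_arc (i : ZMod n) (hkn : k < n) : (cyclicArc n k i).card = k + 1 := by
  rw [cyclicArc, Finset.card_image_of_injOn, Finset.card_range]
  intro a ha b hb hab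
  simp only [Finset.coe_range, Set.mem_Iio, Finset.mem_range] at ha hb
  have : ((a : ℕ) : ZMod n) = b := by
    have := add_left_cancel hab
    exact this
  have := congrArg ZMod.val this
  rwa [ZMod.val_cast_of_lt (by omega), ZMod.val_cast_of_lt (by omega)] at this

end helpers

section helpers2
variable {n k : ℕ} [NeZero n]

lemma neg_one_not_small (hkn : k + 3 ≤ n) : ¬ ((-1 : ZMod n)).val ≤ k := by
  obtain ⟨m, rfl⟩ : ∃ m, n = m + 1 := ⟨n - 1, by omega⟩
  rw [ZMod.val_neg_one]
  omega

lemma arc_index_unique {t s : ZMod n} (hkn : k + 3 ≤ n)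
    (h : cyclicArc n k t = cyclicArc n k s) : t = s := by
  have hkn' : k < n := by omega
  have ht : t ∈ cyclicArc n k s := by
    rw [← h, mem_arc hkn', sub_self, ZMod.val_zero]; omega
  have ht1 : t - 1 ∉ cyclicArc n k s := by
    rw [← h, mem_arc hkn']
    have : t - 1 - t = -1 := by ring
    rw [this]; exact neg_one_not_small hkn
  rw [mem_arc hkn'] at ht ht1
  by_contra hne
  have hts : t - s ≠ 0 := fun hc => hne (by rwa [sub_eq_zero] at hc)
  have := val_sub_one hts
  have heq : t - 1 - s = (t - s) - 1 := by ring
  rw [heq] at ht1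
  omega

lemma val_k_sub {u : ZMod n} (hkn : k < n) (hu : u.val ≤ k) :
    ((k : ZMod n) - u).val = k - u.val := by
  have : (k : ZMod n) - u = ((k - u.val : ℕ) : ZMod n) := by
    rw [Nat.cast_sub (by omega), zmod_cast_val]
  rw [this, ZMod.val_cast_of_lt (by omega)]

lemma k_sub_le_iff {u : ZMod n} (hkn : k < n) :
    ((k : ZMod n) - u).val ≤ k ↔ u.val ≤ k := by
  constructor
  · intro h
    have hu : u = (k : ZMod n) - ((k : ZMod n) - u) := by ring
    rw [hu, val_k_sub hkn h]; omega
  · intro h; rw [val_k_sub hkn h]; omega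

lemma mem_arc_index {a t : ZMod n} (hkn : k < n) :
    a ∈ cyclicArc n k t ↔ t ∈ cyclicArc n k (a - (k : ZMod n)) := by
  rw [mem_arc hkn, mem_arc hkn]
  have : a - t = (k : ZMod n) - (t - (a - (k:ZMod n))) := by ring
  rw [this, k_sub_le_iff hkn]

lemma arc_inter_succ (p : ZMod n) (hk : 1 ≤ k) (hkn : k + 3 ≤ n) :
    (cyclicArc n k p ∩ cyclicArc n k (p + 1)).card = k := by
  have hkn' : k < n := by omega
  have h1 : (1 : ZMod n).val = 1 := by
    rw [← Nat.cast_one, ZMod.val_cast_of_lt (by omega)]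
  have : cyclicArc n k p ∩ cyclicArc n k (p+1) = cyclicArc n (k-1) (p+1) := by
    ext x
    rw [Finset.mem_inter, mem_arc hkn', mem_arc hkn', mem_arc (by omega : k - 1 < n)]
    have he : x - p = (x - (p+1)) + 1 := by ring
    rw [he, ZMod.val_add _ 1, h1]
    have hlt : (x - (p+1)).val < n := ZMod.val_lt _
    constructor
    · rintro ⟨ha, hb⟩
      rcases Nat.lt_or_ge ((x - (p+1)).val + 1) n with h | h
      · rw [Nat.mod_eq_of_lt h] at ha; omega
      · omega
    · intro h
      rw [Nat.mod_eq_of_lt (by omega)]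
      omega
  rw [this, card_arc _ (by omega)]
  omega

end helpers2

section backward
variable {n k : ℕ} [NeZero n]

lemma arc_inter_card_k {p q : ZMod n} (hk : 1 ≤ k) (hkn : k + 3 ≤ n)
    (h : (cyclicArc n k p ∩ cyclicArc n k q).card = k) :
    q = p + 1 ∨ q = p - 1 := by
  have hkn' : k < n := by omega
  have hone : (1 : ZMod n) ≠ 0 := by
    intro hc
    have := congrArg ZMod.val hc
    rw [← Nat.cast_one, ZMod.val_cast_of_lt (by omega), ZMod.val_zero] at this
    omega
  -- the unique missing element
  have hsd : (cyclicArc n k p \ cyclicArc n k q).card = 1 := by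
    have := Finset.card_sdiff_add_card_inter (cyclicArc n k p) (cyclicArc n k q)
    rw [h, card_arc p hkn'] at this
    omega
  obtain ⟨x, hx⟩ := Finset.card_eq_one.mp hsd
  have hxp : x ∈ cyclicArc n k p := by
    have : x ∈ cyclicArc n k p \ cyclicArc n k q := hx ▸ Finset.mem_singleton_self x
    exact (Finset.mem_sdiff.mp this).1
  have hxq : x ∉ cyclicArc n k q := by
    have : x ∈ cyclicArc n k p \ cyclicArc n k q := hx ▸ Finset.mem_singleton_self x
    exact (Finset.mem_sdiff.mp this).2
  have huniq : ∀ y, y ∈ cyclicArc n k p → y ∉ cyclicArc n k q → y = x := by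
    intro y h1 h2
    have : y ∈ cyclicArc n k p \ cyclicArc n k q := Finset.mem_sdiff.mpr ⟨h1, h2⟩
    rw [hx] at this; exact Finset.mem_singleton.mp this
  rw [mem_arc hkn'] at hxp hxq
  -- x+1 ∉ A q  or  x-1 ∉ A q
  have hnb : x + 1 ∉ cyclicArc n k q ∨ x - 1 ∉ cyclicArc n k q := by
    by_contra hc
    push_neg at hc
    obtain ⟨ha, hb⟩ := hc
    rw [mem_arc hkn'] at ha hb
    by_cases hz : x + 1 - q = 0
    · -- q = x + 1, so x - q = -1, x - 1 - q = -2
      have hq : q = x + 1 := (sub_eq_zero.mp hz).symm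
      have h2 : x - 1 - q = -1 - 1 := by rw [hq]; ring
      have hm1 : (-1 : ZMod n) ≠ 0 := by
        intro hcc
        exact neg_one_not_small hkn (by rw [hcc, ZMod.val_zero]; omega)
      have := val_sub_one hm1
      rw [h2] at hb
      obtain ⟨m, rfl⟩ : ∃ m, n = m + 1 := ⟨n - 1, by omega⟩
      rw [this.1, ZMod.val_neg_one] at hb
      omega
    · have := val_sub_one hz
      have he : x - q = (x + 1 - q) - 1 := by ring
      rw [he] at hxq
      omega
  rcases hnb with hnb | hnb
  · -- x = p + k, q = p - 1
    right
    have hx1p : x + 1 ∉ cyclicArc n k p := by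
      intro hc
      have := huniq (x+1) hc (by exact hnb)
      have : (1 : ZMod n) = 0 := by
        have h' := this
        calc (1:ZMod n) = (x+1) - x := by ring
        _ = 0 := by rw [h']; ring
      exact hone this
    rw [mem_arc hkn'] at hx1p
    have hm : (x - p).val = k := by
      by_contra hc
      have he : x + 1 - p = (x - p) + 1 := by ring
      rw [he, ZMod.val_add _ 1, ← Nat.cast_one, ZMod.val_cast_of_lt (by omega : 1 < n),
        Nat.mod_eq_of_lt (by have := ZMod.val_lt (x - p); omega)] at hx1p
      omega
    have hxpk : x = p + (k : ZMod n) := by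
      have := zmod_cast_val (x - p)
      rw [hm] at this
      rw [this]; ring
    -- x - 1 ∈ A q
    have hx1q : x - 1 ∈ cyclicArc n k q := by
      by_contra hc
      have hx1inp : x - 1 ∈ cyclicArc n k p := by
        rw [mem_arc hkn']
        have he : x - 1 - p = ((k : ZMod n)) - 1 := by rw [hxpk]; ring
        have he2 : ((k : ZMod n)) - 1 = ((k - 1 : ℕ) : ZMod n) := by
          rw [Nat.cast_sub (by omega), Nat.cast_one]
        rw [he, he2, ZMod.val_cast_of_lt (by omega)]
        omega
      have := huniq (x - 1) hx1inp hc
      apply hone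
      calc (1:ZMod n) = x - (x - 1) := by ring
      _ = 0 := by rw [this]; ring
    rw [mem_arc hkn'] at hx1q
    have hxqne : x - q ≠ 0 := by
      intro hc; rw [hc, ZMod.val_zero] at hxq; omega
    have hvs := val_sub_one hxqne
    have he : x - 1 - q = (x - q) - 1 := by ring
    rw [he] at hx1q
    have hval : (x - q).val = k + 1 := by omega
    have : x - q = ((k + 1 : ℕ) : ZMod n) := by
      rw [← hval, zmod_cast_val]
    rw [Nat.cast_add, Nat.cast_one] at this
    have : q = x - (k : ZMod n) - 1 := by rw [← sub_eq_zero]; rw [← sub_eq_zero] at this; linear_combination -this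
    rw [this, hxpk]; ring
  · -- x = p, q = p + 1
    left
    have hx1p : x - 1 ∉ cyclicArc n k p := by
      intro hc
      have := huniq (x-1) hc hnb
      apply hone
      calc (1:ZMod n) = x - (x - 1) := by ring
      _ = 0 := by rw [this]; ring
    rw [mem_arc hkn'] at hx1p
    have hm : x - p = 0 := by
      by_contra hc
      have := val_sub_one hc
      have he : x - 1 - p = (x - p) - 1 := by ring
      rw [he] at hx1p
      omega
    have hxp' : x = p := by rwa [sub_eq_zero] at hm
    subst hxp'
    -- x + 1 ∈ A q
    have hp1q : x + 1 ∈ cyclicArc n k q := by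
      by_contra hc
      have hp1inp : x + 1 ∈ cyclicArc n k x := by
        rw [mem_arc hkn', add_sub_cancel_left, ← Nat.cast_one,
          ZMod.val_cast_of_lt (by omega : 1 < n)]
        omega
      have := huniq (x + 1) hp1inp hc
      apply hone
      calc (1:ZMod n) = (x+1) - x := by ring
      _ = 0 := by rw [this]; ring
    rw [mem_arc hkn'] at hp1q
    have he : x + 1 - q = (x - q) + 1 := by ring
    rw [he, ZMod.val_add _ 1, ← Nat.cast_one, ZMod.val_cast_of_lt (by omega : 1 < n)] at hp1q
    have hlt : (x - q).val < n := ZMod.val_lt _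
    have hvn1 : (x - q).val = n - 1 := by
      rcases Nat.lt_or_ge ((x - q).val + 1) n with h' | h'
      · rw [Nat.mod_eq_of_lt h'] at hp1q; omega
      · omega
    have : x - q = ((n - 1 : ℕ) : ZMod n) := by rw [← hvn1, zmod_cast_val]
    have hcast : ((n - 1 : ℕ) : ZMod n) = -1 := by
      rw [Nat.cast_sub (by omega), ZMod.natCast_self, Nat.cast_one]; ring
    rw [hcast] at this
    rw [← sub_eq_zero] at this ⊢
    linear_combination -this
end backward

section part1
variable {n k : ℕ} [NeZero n]

lemma arc_maps_to_arc {e : Equiv.Perm (ZMod n)} (hkn : k + 3 ≤ n)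
    (he : ∀ σ : Finset (ZMod n), IsFaceN n k σ ↔ IsFaceN n k (σ.image e))
    (t : ZMod n) : ∃ s, (cyclicArc n k t).image e = cyclicArc n k s := by
  obtain ⟨s, hs⟩ := (he (cyclicArc n k t)).mp ⟨t, Finset.Subset.refl _⟩
  refine ⟨s, Finset.eq_of_subset_of_card_le hs ?_⟩
  rw [card_arc _ (by omega), Finset.card_image_of_injective _ e.injective,
    card_arc _ (by omega)]

lemma step_pm {e : Equiv.Perm (ZMod n)} (hk : 1 ≤ k) (hkn : k + 3 ≤ n)
    (he : ∀ σ : Finset (ZMod n), IsFaceN n k σ ↔ IsFaceN n k (σ.image e))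
    (i : ZMod n) : e (i + 1) = e i + 1 ∨ e (i + 1) = e i - 1 := by
  have hkn' : k < n := by omega
  -- the induced map on arc indices
  choose T hT using arc_maps_to_arc hkn he
  have hTinj : Function.Injective T := by
    intro a b hab
    apply arc_index_unique hkn
    apply Finset.image_injective e.injective
    rw [hT a, hT b, hab]
  have hTsurj : Function.Surjective T := Finite.surjective_of_injective hTinj
  -- membership transfer
  have hmem : ∀ (a t : ZMod n), e a ∈ cyclicArc n k (T t) ↔ a ∈ cyclicArc n k t := by
    intro a t
    rw [← hT t]
    constructor
    · intro h
      obtain ⟨y, hy, hye⟩ := Finset.mem_image.mp h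
      rwa [← e.injective hye]
    · intro h
      exact Finset.mem_image_of_mem _ h
  -- the set of arc indices containing a pair
  set D : ZMod n → ZMod n → Finset (ZMod n) := fun a b =>
    cyclicArc n k (a - (k : ZMod n)) ∩ cyclicArc n k (b - (k : ZMod n)) with hD
  have hDmem : ∀ a b t : ZMod n, t ∈ D a b ↔ a ∈ cyclicArc n k t ∧ b ∈ cyclicArc n k t := by
    intro a b t
    rw [hD]
    simp only [Finset.mem_inter]
    rw [← mem_arc_index hkn', ← mem_arc_index hkn']
  have himg : D (e i) (e (i+1)) = (D i (i+1)).image T := by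
    ext s
    obtain ⟨t, rfl⟩ := hTsurj s
    rw [hDmem, hmem, hmem, ← hDmem]
    constructor
    · intro h; exact Finset.mem_image_of_mem _ h
    · intro h
      obtain ⟨y, hy, hye⟩ := Finset.mem_image.mp h
      rwa [← hTinj hye]
  have hcard1 : (D i (i+1)).card = k := by
    show (cyclicArc n k (i - (k:ZMod n)) ∩ cyclicArc n k ((i+1) - (k : ZMod n))).card = k
    have heq : (i + 1) - (k : ZMod n) = (i - (k:ZMod n)) + 1 := by ring
    rw [heq]
    exact arc_inter_succ _ hk hkn
  have hcard2 : (D (e i) (e (i+1))).card = k := by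
    rw [himg, Finset.card_image_of_injective _ hTinj, hcard1]
  have hcard2' : (cyclicArc n k (e i - (k:ZMod n)) ∩ cyclicArc n k (e (i+1) - (k : ZMod n))).card = k := hcard2
  rcases arc_inter_card_k hk hkn hcard2' with h | h
  · left; linear_combination h
  · right; linear_combination h

end part1

section dihedral
variable {n k : ℕ} [NeZero n]

/-- The permutation representation of the dihedral group on `ZMod n`. -/
def dihedralPerm (n : ℕ) : DihedralGroup n →* Equiv.Perm (ZMod n) where
  toFun d := match d with
    | .r i => Equiv.subRight i
    | .sr i => Equiv.subLeft i
  map_one' := by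
    show Equiv.subRight (0 : ZMod n) = 1
    ext x; simp
  map_mul' := by
    rintro (i | i) (j | j) <;> ext x <;>
      simp [Equiv.subRight_apply, Equiv.subLeft_apply, Equiv.Perm.mul_apply] <;> ring

lemma dihedralPerm_r (i : ZMod n) (x : ZMod n) : dihedralPerm n (.r i) x = x - i := rfl
lemma dihedralPerm_sr (i : ZMod n) (x : ZMod n) : dihedralPerm n (.sr i) x = i - x := rfl

lemma arc_image_subRight (t a : ZMod n) :
    (cyclicArc n k t).image (fun x => x - a) = cyclicArc n k (t - a) := by
  rw [cyclicArc, cyclicArc, Finset.image_image]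
  apply Finset.image_congr
  intro j _
  show t + (j : ZMod n) - a = t - a + (j : ZMod n)
  ring

lemma arc_image_subLeft (hkn : k + 3 ≤ n) (t a : ZMod n) :
    (cyclicArc n k t).image (fun x => a - x) = cyclicArc n k (a - t - (k : ZMod n)) := by
  have hkn' : k < n := by omega
  ext x
  have hmem : x ∈ (cyclicArc n k t).image (fun x => a - x) ↔ a - x ∈ cyclicArc n k t := by
    rw [Finset.mem_image]
    constructor
    · rintro ⟨y, hy, rfl⟩; simpa using hy
    · intro h; exact ⟨a - x, h, by ring⟩
  rw [hmem, mem_arc hkn', mem_arc hkn']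
  have he : a - x - t = (k : ZMod n) - (x - (a - t - (k:ZMod n))) := by ring
  rw [he, k_sub_le_iff hkn']

lemma perm_mem_of_arc_maps {e : Equiv.Perm (ZMod n)}
    (h1 : ∀ t, ∃ s, (cyclicArc n k t).image e = cyclicArc n k s)
    (h2 : ∀ t, ∃ s, (cyclicArc n k t).image e.symm = cyclicArc n k s) :
    ∀ σ : Finset (ZMod n), IsFaceN n k σ ↔ IsFaceN n k (σ.image e) := by
  intro σ
  constructor
  · rintro ⟨t, ht⟩
    obtain ⟨s, hs⟩ := h1 t
    exact ⟨s, hs ▸ Finset.image_subset_image ht⟩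
  · rintro ⟨t, ht⟩
    obtain ⟨s, hs⟩ := h2 t
    refine ⟨s, ?_⟩
    have hσ : σ = (σ.image e).image e.symm := by
      rw [Finset.image_image]
      simp
    rw [hσ, ← hs]
    exact Finset.image_subset_image ht

lemma dihedralPerm_mem (hkn : k + 3 ≤ n) (d : DihedralGroup n) :
    ∀ σ : Finset (ZMod n), IsFaceN n k σ ↔ IsFaceN n k (σ.image (dihedralPerm n d)) := by
  have key : ∀ d : DihedralGroup n, ∀ t, ∃ s,
      (cyclicArc n k t).image (dihedralPerm n d) = cyclicArc n k s := by
    rintro (i | i) t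
    · exact ⟨t - i, arc_image_subRight t i⟩
    · exact ⟨i - t - (k : ZMod n), arc_image_subLeft hkn t i⟩
  apply perm_mem_of_arc_maps (key d)
  have : (dihedralPerm n d).symm = dihedralPerm n d⁻¹ := by
    rw [map_inv]; rfl
  rw [this]
  exact key d⁻¹

end dihedral

section prop
variable {n : ℕ} [NeZero n]

lemma zmod_two_ne_zero (hn : 4 ≤ n) : (2 : ZMod n) ≠ 0 := by
  intro hc
  have : ((2 : ℕ) : ZMod n) = 0 := by push_cast; exact hc
  have := congrArg ZMod.val this
  rw [ZMod.val_cast_of_lt (by omega), ZMod.val_zero] at this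
  omega

lemma rigid (g : Equiv.Perm (ZMod n)) (hn : 4 ≤ n)
    (hg : ∀ i : ZMod n, g (i + 1) = g i + 1 ∨ g (i + 1) = g i - 1) :
    (∀ x, g x = g 0 + x) ∨ (∀ x, g x = g 0 - x) := by
  set ε : ZMod n := g 1 - g 0 with hε
  have hε1 : ε = 1 ∨ ε = -1 := by
    rcases hg 0 with h | h <;> rw [zero_add] at h <;> [left; right] <;>
      rw [hε, h] <;> ring
  have hstep : ∀ m : ℕ, g ((m : ZMod n) + 1) = g (m : ZMod n) + ε := by
    intro m
    induction m with
    | zero => simp [hε]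
    | succ m ih =>
      push_cast
      have h2 := hg ((m : ZMod n) + 1)
      have hwrong : g ((m:ZMod n) + 1 + 1) ≠ g (m : ZMod n) + ε - ε := by
        intro hc
        have : g ((m:ZMod n) + 1 + 1) = g ((m:ZMod n)) := by rw [hc]; ring_nf
        have := g.injective this
        have h2 : (2 : ZMod n) = 0 := by linear_combination this
        exact zmod_two_ne_zero hn h2
      rcases h2 with h | h <;> rcases hε1 with e1 | e1
      · rw [h, e1]
      · exfalso; apply hwrong; rw [h, ih, e1]; try ring
      · exfalso; apply hwrong; rw [h, ih, e1]; try ring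
      · rw [h, e1]; try ring
  have hval : ∀ m : ℕ, g (m : ZMod n) = g 0 + ε * m := by
    intro m
    induction m with
    | zero => simp
    | succ m ih =>
      push_cast
      have := hstep m
      rw [this, ih]
      ring
  have hall : ∀ x : ZMod n, g x = g 0 + ε * x := by
    intro x
    have := hval x.val
    rwa [zmod_cast_val] at this
  rcases hε1 with e1 | e1
  · left; intro x; rw [hall x, e1]; ring
  · right; intro x; rw [hall x, e1]; ring

lemma dihedralPerm_injective (hn : 4 ≤ n) : Function.Injective (dihedralPerm n) := by
  rw [injective_iff_map_eq_one]
  rintro (i | i) h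
  · have := congrFun (congrArg (fun e : Equiv.Perm (ZMod n) => (e : ZMod n → ZMod n)) h) 0
    simp only [dihedralPerm_r] at this
    have hi : i = 0 := by
      have : (0 : ZMod n) - i = 0 := this
      linear_combination -this
    rw [hi]; rfl
  · exfalso
    have h0 := congrFun (congrArg (fun e : Equiv.Perm (ZMod n) => (e : ZMod n → ZMod n)) h) 0
    have h1 := congrFun (congrArg (fun e : Equiv.Perm (ZMod n) => (e : ZMod n → ZMod n)) h) 1
    simp only [dihedralPerm_sr] at h0 h1
    have hi0 : i - 0 = 0 := h0
    have hi1 : i - 1 = 1 := h1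
    apply zmod_two_ne_zero hn
    linear_combination hi0 - hi1

end prop


section final
variable {n k : ℕ} [NeZero n]

lemma nerveAut_eq_range (hk : 1 ≤ k) (hkn : k + 3 ≤ n) :
    nerveAut n k = (dihedralPerm n).range := by
  apply le_antisymm
  · intro e he
    have he' : ∀ σ : Finset (ZMod n), IsFaceN n k σ ↔ IsFaceN n k (σ.image e) := he
    rcases rigid e (by omega) (step_pm hk hkn he') with h | h
    · refine ⟨.r (-(e 0)), ?_⟩
      ext x
      rw [dihedralPerm_r, h x]; ring
    · refine ⟨.sr (e 0), ?_⟩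
      ext x
      rw [dihedralPerm_sr, h x]
  · rintro e ⟨d, rfl⟩
    exact dihedralPerm_mem hkn d

end final

/-- for `1 ≤ k ≤ n-3`, every automorphism of `N(n,k)` restricts to an
automorphism of the cycle graph `Cₙ` (it sends neighbors `i, i+1` to neighbors), and
hence the automorphism group of `N(n,k)` is the dihedral group of order `2n`. -/
theorem nerveAut_eq_dihedral (n k : ℕ) [NeZero n] (hk : 1 ≤ k) (hkn : k + 3 ≤ n) :
    (∀ e ∈ nerveAut n k, ∀ i : ZMod n, e (i + 1) = e i + 1 ∨ e (i + 1) = e i - 1) ∧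
    Nonempty ((nerveAut n k) ≃* DihedralGroup n) := by
  constructor
  · intro e he i
    exact step_pm hk hkn he i
  · exact ⟨(MulEquiv.subgroupCongr (nerveAut_eq_range hk hkn)).trans
      (MonoidHom.ofInjective (dihedralPerm_injective (by omega))).symm⟩
end

section
/- Let U be a finite collection of closed arcs in S^1 with all 2n endpoints distinct, such that no arc is contained in another and the cyclic sequence of endpoints alternates between opening endpoints a_i and closing endpoints b_i. Then there exists 0 ≤ k < n such that the nerve complex N(U) is isomorphic to N(n,k). -/
open Set

/-- The lift to `ℝ` of the cyclic sequence of opening endpoints: `extPts n a t` is the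
representative of `a (t mod n)` shifted up by `t / n` full turns. Strict monotonicity of
this lift says the `a`'s appear in clockwise cyclic order. -/
def extPts (n : ℕ) [NeZero n] (a : Fin n → ℝ) (t : ℕ) : ℝ :=
  a ((Fin.ofNat n t)) + ((t / n : ℕ) : ℝ)

/-!
Lift to `ℝ`: the opening endpoints become the strictly increasing sequence `A t = extPts n a t`
and the closing ones `B t = extPts n b t`, with `A t < B t < A (t + n)`. No containment makes
`B` strictly increasing as well, and alternation puts exactly one value of `B` in each gap
`(A i, A (i + 1))`; together these force the gap containing `B t` to be the one starting at
`A (t + k)`, for a fixed `k < n`. A point of `[A i, A (i + 1))` then lies only in lifted arcs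
`[A t, B t]` with `i - k ≤ t ≤ i`, while `B j` lies in each of the lifted arcs `j, …, j + k`.
-/

theorem coe_eq_coe_iff_exists_int {x y : ℝ} :
    (x : AddCircle (1 : ℝ)) = y ↔ ∃ z : ℤ, y = x + z := by
  rw [QuotientAddGroup.eq, AddSubgroup.mem_zmultiples_iff]
  simp only [zsmul_eq_mul, mul_one]
  exact exists_congr fun z => by constructor <;> intro h <;> linarith

theorem coe_add_intCast (x : ℝ) (z : ℤ) : ((x + z : ℝ) : AddCircle (1 : ℝ)) = x :=
  (coe_eq_coe_iff_exists_int.mpr ⟨z, rfl⟩).symm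

theorem image_coe_Icc_add_intCast (u v : ℝ) (z : ℤ) :
    ((↑) : ℝ → AddCircle (1 : ℝ)) '' Icc (u + z) (v + z) = (↑) '' Icc u v := by
  rw [← image_add_const_Icc, image_image]
  simp only [coe_add_intCast]

theorem Nat.exists_le_lt_succ {α : Type*} [LinearOrder α] {f : ℕ → α} {x : α} {N : ℕ}
    (h0 : f 0 ≤ x) (hN : x < f N) : ∃ i, f i ≤ x ∧ x < f (i + 1) := by
  induction N with
  | zero => exact absurd hN h0.not_gt
  | succ N ih =>
    by_cases h : x < f N
    · exact ih h
    · exact ⟨N, not_lt.mp h, hN⟩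

theorem le_and_le_add_of_mem_Icc {α : Type*} [LinearOrder α] {A B : ℕ → α} {k : ℕ}
    (hA : StrictMono A) (hk : ∀ t, B t < A (t + k + 1)) {x : α} {i s : ℕ}
    (hi : A i ≤ x) (hi' : x < A (i + 1)) (hs : x ∈ Icc (A s) (B s)) : s ≤ i ∧ i ≤ s + k := by
  have h1 : s < i + 1 := hA.lt_iff_lt.mp (hs.1.trans_lt hi')
  have h2 : i < s + k + 1 := hA.lt_iff_lt.mp (hi.trans_lt (hs.2.trans_lt (hk s)))
  omega

theorem Fin.ofNat_succ_ne {n : ℕ} [NeZero n] (hn : 2 ≤ n) (t : ℕ) :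
    Fin.ofNat n (t + 1) ≠ Fin.ofNat n t := by
  intro h
  have hdvd : n ∣ t + 1 - t := (Nat.modEq_iff_dvd' (Nat.le_succ t)).mp (congrArg Fin.val h).symm
  have := Nat.le_of_dvd Nat.one_pos (by simpa using hdvd)
  omega

theorem ZMod.finEquiv_ofNat (n : ℕ) [NeZero n] (s : ℕ) :
    ZMod.finEquiv n (Fin.ofNat n s) = s := by
  obtain _ | n := n
  · exact absurd rfl (NeZero.ne 0)
  · rfl

theorem natCast_mem_cyclicArc {n k j s : ℕ} (hj : j ≤ s) (hs : s ≤ j + k) :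
    (s : ZMod n) ∈ cyclicArc n k j :=
  Finset.mem_image.mpr ⟨s - j, Finset.mem_range.mpr (by omega), by
    rw [← Nat.cast_add, Nat.add_sub_cancel' hj]⟩

theorem exists_eq_ofNat_of_finEquiv_mem_cyclicArc {n k : ℕ} [NeZero n] {m : Fin n}
    {i : ZMod n} (h : ZMod.finEquiv n m ∈ cyclicArc n k i) :
    ∃ c ≤ k, m = Fin.ofNat n (i.val + c) := by
  obtain ⟨c, hc, hcm⟩ := Finset.mem_image.mp h
  refine ⟨c, Nat.lt_succ_iff.mp (Finset.mem_range.mp hc), (ZMod.finEquiv n).injective ?_⟩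
  rw [ZMod.finEquiv_ofNat, ← hcm, Nat.cast_add, ZMod.natCast_zmod_val]

section extPts

variable {n : ℕ} [NeZero n]

theorem extPts_add_mul (f : Fin n → ℝ) (t w : ℕ) :
    extPts n f (t + w * n) = extPts n f t + w := by
  have hn : 0 < n := Nat.pos_of_neZero n
  have hres : Fin.ofNat n (t + w * n) = Fin.ofNat n t := by
    ext; simp
  simp only [extPts, hres, Nat.add_mul_div_right _ _ hn, Nat.cast_add]
  ring

theorem extPts_val (f : Fin n → ℝ) (m : Fin n) : extPts n f m = f m := by
  simp [extPts, Nat.div_eq_of_lt m.isLt]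

theorem extPts_val_add_mul (f : Fin n → ℝ) (m : Fin n) (w : ℕ) :
    extPts n f (m + w * n) = f m + w := by
  rw [extPts_add_mul, extPts_val]

theorem Fin.ofNat_val_add_mul (m : Fin n) (w : ℕ) : Fin.ofNat n (m + w * n) = m := by
  ext; simp [Nat.mod_eq_of_lt m.isLt]

theorem coe_extPts (f : Fin n → ℝ) (t : ℕ) :
    ((extPts n f t : ℝ) : AddCircle (1 : ℝ)) = f (Fin.ofNat n t) := by
  rw [extPts, ← Int.cast_natCast]
  exact coe_add_intCast _ _

theorem image_coe_Icc_extPts (a b : Fin n → ℝ) (t : ℕ) :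
    ((↑) : ℝ → AddCircle (1 : ℝ)) '' Icc (extPts n a t) (extPts n b t)
      = (↑) '' Icc (a (Fin.ofNat n t)) (b (Fin.ofNat n t)) := by
  rw [extPts, extPts, ← Int.cast_natCast]
  exact image_coe_Icc_add_intCast _ _ _

end extPts

section arcs

variable {n : ℕ} [NeZero n] {a b : Fin n → ℝ}

theorem extPts_lt_extPts (hab : ∀ m, a m < b m) (t : ℕ) : extPts n a t < extPts n b t :=
  add_lt_add_left (hab _) _

theorem extPts_lt_extPts_add_self (hba : ∀ m, b m < a m + 1) (t : ℕ) :
    extPts n b t < extPts n a (t + n) := by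
  have hper := extPts_add_mul a t 1
  rw [one_mul, Nat.cast_one] at hper
  rw [hper, extPts, extPts]
  linarith [hba (Fin.ofNat n t)]

theorem extPts_ne_extPts
    (hanb : ∀ m m' : Fin n, ((a m : ℝ) : AddCircle (1 : ℝ)) ≠ ((b m' : ℝ) : AddCircle (1 : ℝ)))
    (s t : ℕ) : extPts n a s ≠ extPts n b t :=
  fun h => hanb _ _ (by rw [← coe_extPts, ← coe_extPts, h])

theorem strictMono_extPts_of_not_subset
    (hnosub : ∀ m m' : Fin n, m ≠ m' →
      ¬ ((↑) : ℝ → AddCircle (1 : ℝ)) '' Icc (a m) (b m) ⊆ (↑) '' Icc (a m') (b m'))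
    (hA : StrictMono (extPts n a)) : StrictMono (extPts n b) := by
  refine strictMono_nat_of_lt_succ fun t => ?_
  obtain hn | hn : n = 1 ∨ 2 ≤ n := by have := Nat.pos_of_neZero n; omega
  · subst hn
    have hper := extPts_add_mul b t 1
    simp only [mul_one, Nat.cast_one] at hper
    linarith
  · by_contra! h
    apply hnosub _ _ (Fin.ofNat_succ_ne hn t)
    rw [← image_coe_Icc_extPts, ← image_coe_Icc_extPts]
    exact image_mono (Icc_subset_Icc (hA (Nat.lt_succ_self t)).le h)

theorem exists_extPts_eq_of_lt {f : Fin n → ℝ} (hf : StrictMono (extPts n f)) {m : Fin n}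
    {z : ℤ} (h : extPts n f 0 < f m + z) : ∃ s, extPts n f s = f m + z := by
  have hm : f m < extPts n f 0 + 1 := by
    have := hf (show (m : ℕ) < 0 + 1 * n by simp)
    rwa [extPts_add_mul, extPts_val, Nat.cast_one] at this
  have hz : 0 ≤ z := by
    have : (-1 : ℤ) < z := by exact_mod_cast (show (-1 : ℝ) < z by linarith)
    omega
  lift z to ℕ using hz
  exact ⟨m + z * n, by rw [extPts_val_add_mul]; push_cast; rfl⟩

def ClosesIn (a b : Fin n → ℝ) (i : ℕ) (m : Fin n) : Prop :=
  ∃ z : ℤ, extPts n a i < b m + z ∧ b m + z < extPts n a (i + 1)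

theorem closesIn_add_mul {i w : ℕ} {m : Fin n} :
    ClosesIn a b (i + w * n) m ↔ ClosesIn a b i m := by
  have hper : extPts n a (i + w * n + 1) = extPts n a (i + 1) + w := by
    rw [add_right_comm]; exact extPts_add_mul a (i + 1) w
  simp only [ClosesIn, extPts_add_mul, hper]
  constructor
  · rintro ⟨z, hz1, hz2⟩; exact ⟨z - w, by push_cast; linarith, by push_cast; linarith⟩
  · rintro ⟨z, hz1, hz2⟩; exact ⟨z + w, by push_cast; linarith, by push_cast; linarith⟩

theorem existsUnique_closesIn (halt : ∀ i < n, ∃! m, ClosesIn a b i m) (i : ℕ) :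
    ∃! m, ClosesIn a b i m := by
  rw [← Nat.mod_add_div' i n]
  simp only [closesIn_add_mul]
  exact halt _ (Nat.mod_lt i (Nat.pos_of_neZero n))

theorem closesIn_ofNat {i t : ℕ} (h1 : extPts n a i < extPts n b t)
    (h2 : extPts n b t < extPts n a (i + 1)) : ClosesIn a b i (Fin.ofNat n t) :=
  ⟨(t / n : ℕ), by rwa [Int.cast_natCast], by rwa [Int.cast_natCast]⟩

theorem extPts_lt_extPts_succ
    (hanb : ∀ m m' : Fin n, ((a m : ℝ) : AddCircle (1 : ℝ)) ≠ ((b m' : ℝ) : AddCircle (1 : ℝ)))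
    (hB : StrictMono (extPts n b)) (hgap : ∀ i, ∃! m, ClosesIn a b i m) {i t : ℕ}
    (h1 : extPts n a i < extPts n b t) (h2 : extPts n b t < extPts n a (i + 1)) :
    extPts n a (i + 1) < extPts n b (t + 1) := by
  obtain hn | hn : n = 1 ∨ 2 ≤ n := by have := Nat.pos_of_neZero n; omega
  · subst hn
    have hperA := extPts_add_mul a i 1
    have hperB := extPts_add_mul b t 1
    simp only [mul_one, Nat.cast_one] at hperA hperB
    linarith
  · refine lt_of_le_of_ne ?_ (extPts_ne_extPts hanb _ _)
    by_contra! h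
    exact Fin.ofNat_succ_ne hn t ((hgap i).unique
      (closesIn_ofNat (h1.trans (hB (Nat.lt_succ_self t))) h) (closesIn_ofNat h1 h2))

theorem extPts_succ_lt_extPts (hB : StrictMono (extPts n b))
    (hgap : ∀ i, ∃! m, ClosesIn a b i m) {i t : ℕ} (h : extPts n b t < extPts n a (i + 1)) :
    extPts n b (t + 1) < extPts n a (i + 1 + 1) := by
  by_contra! h'
  obtain ⟨m, ⟨z, hz1, hz2⟩, -⟩ := hgap (i + 1)
  obtain ⟨s, hs⟩ := exists_extPts_eq_of_lt hB
    ((hB.monotone (Nat.zero_le t)).trans_lt (h.trans hz1))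
  have c1 : t < s := hB.lt_iff_lt.mp (by linarith)
  have c2 : s < t + 1 := hB.lt_iff_lt.mp (by linarith)
  omega

theorem exists_extPts_shift (hab : ∀ m, a m < b m) (hba : ∀ m, b m < a m + 1)
    (hanb : ∀ m m' : Fin n, ((a m : ℝ) : AddCircle (1 : ℝ)) ≠ ((b m' : ℝ) : AddCircle (1 : ℝ)))
    (hA : StrictMono (extPts n a)) (hB : StrictMono (extPts n b))
    (hgap : ∀ i, ∃! m, ClosesIn a b i m) :
    ∃ k < n, ∀ t, extPts n a (t + k) < extPts n b t ∧ extPts n b t < extPts n a (t + k + 1) := by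
  have hlt : extPts n b 0 < extPts n a n := by
    simpa using extPts_lt_extPts_add_self hba 0
  obtain ⟨k, hk1, hk2⟩ := Nat.exists_le_lt_succ (extPts_lt_extPts hab 0).le hlt
  refine ⟨k, hA.lt_iff_lt.mp (hk1.trans_lt hlt), fun t => ?_⟩
  induction t with
  | zero => simpa using ⟨hk1.lt_of_ne (extPts_ne_extPts hanb _ _), hk2⟩
  | succ t ih =>
    rw [add_right_comm t 1 k]
    exact ⟨extPts_lt_extPts_succ hanb hB hgap ih.1 ih.2, extPts_succ_lt_extPts hB hgap ih.2⟩

theorem exists_mem_Icc_extPts_of_coe_mem (hba : ∀ m, b m < a m + 1)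
    (hA : StrictMono (extPts n a)) {x : ℝ} (hx : extPts n a n ≤ x) {m : Fin n}
    (hm : (x : AddCircle (1 : ℝ)) ∈ ((↑) : ℝ → AddCircle (1 : ℝ)) '' Icc (a m) (b m)) :
    ∃ s, Fin.ofNat n s = m ∧ x ∈ Icc (extPts n a s) (extPts n b s) := by
  obtain ⟨y, hy, hyx⟩ := hm
  obtain ⟨z, rfl⟩ := coe_eq_coe_iff_exists_int.mp hyx
  have ham : a m < extPts n a n := extPts_val a m ▸ hA m.isLt
  have hz : 0 ≤ z := by
    have : (-1 : ℤ) < z := by exact_mod_cast (show (-1 : ℝ) < z by linarith [hy.2, hba m])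
    omega
  lift z to ℕ using hz
  refine ⟨m + z * n, Fin.ofNat_val_add_mul m z, ?_⟩
  rw [extPts_val_add_mul, extPts_val_add_mul]
  push_cast
  exact ⟨by linarith [hy.1], by linarith [hy.2]⟩

theorem isFaceN_of_nonempty (hba : ∀ m, b m < a m + 1) (hA : StrictMono (extPts n a))
    {k : ℕ} (hkn : k < n) (hk : ∀ t, extPts n b t < extPts n a (t + k + 1)) {σ : Finset (Fin n)}
    (h : (⋂ m ∈ σ, ((↑) : ℝ → AddCircle (1 : ℝ)) '' Icc (a m) (b m)).Nonempty) :
    IsFaceN n k (σ.image (ZMod.finEquiv n)) := by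
  obtain ⟨x, hx⟩ := h
  rw [mem_iInter₂] at hx
  -- above `A n`, every arc containing `x` has a lift `[A s, B s]` with `s : ℕ`
  set y : ℝ := (AddCircle.equivIco 1 (extPts n a n) x : ℝ)
  have hy : y ∈ Ico (extPts n a n) (extPts n a n + 1) := (AddCircle.equivIco 1 _ x).2
  have hyx : (y : AddCircle (1 : ℝ)) = x := AddCircle.coe_equivIco
  have hlt : y < extPts n a (n + 1 * n) := by rw [extPts_add_mul]; exact_mod_cast hy.2
  obtain ⟨i, hi, hi'⟩ := Nat.exists_le_lt_succ ((hA.monotone (Nat.zero_le n)).trans hy.1) hlt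
  have hni : n ≤ i := Nat.lt_succ_iff.mp (hA.lt_iff_lt.mp (hy.1.trans_lt hi'))
  refine ⟨(i - k : ℕ), Finset.image_subset_iff.mpr fun m hm => ?_⟩
  obtain ⟨s, rfl, hs⟩ := exists_mem_Icc_extPts_of_coe_mem hba hA hy.1 (hyx ▸ hx m hm)
  obtain ⟨hsi, his⟩ := le_and_le_add_of_mem_Icc hA hk hi hi' hs
  rw [ZMod.finEquiv_ofNat]
  exact natCast_mem_cyclicArc (by omega) (by omega)

theorem nonempty_of_isFaceN (hA : Monotone (extPts n a)) (hB : Monotone (extPts n b)) {k : ℕ}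
    (hk : ∀ t, extPts n a (t + k) < extPts n b t) {σ : Finset (Fin n)}
    (h : IsFaceN n k (σ.image (ZMod.finEquiv n))) :
    (⋂ m ∈ σ, ((↑) : ℝ → AddCircle (1 : ℝ)) '' Icc (a m) (b m)).Nonempty := by
  obtain ⟨i, hi⟩ := h
  refine ⟨extPts n b i.val, mem_iInter₂.mpr fun m hm => ?_⟩
  obtain ⟨c, hc, rfl⟩ :=
    exists_eq_ofNat_of_finEquiv_mem_cyclicArc (hi (Finset.mem_image_of_mem _ hm))
  rw [← image_coe_Icc_extPts]
  exact mem_image_of_mem _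
    ⟨(hA (Nat.add_le_add_left hc _)).trans (hk _).le, hB (Nat.le_add_right _ _)⟩

end arcs

theorem alternating_arcs_nerve_iso_general (n : ℕ) [NeZero n]
    (U : Fin n → Set (AddCircle (1 : ℝ))) (a b : Fin n → ℝ)
    (hU : ∀ m, U m = (fun x : ℝ => (x : AddCircle (1 : ℝ))) '' Icc (a m) (b m))
    (hlen : ∀ m, a m ≤ b m ∧ b m < a m + 1)
    (hmono : StrictMono (extPts n a))
    (hanb : ∀ m m' : Fin n, ((a m : ℝ) : AddCircle (1 : ℝ)) ≠ ((b m' : ℝ) : AddCircle (1 : ℝ)))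
    (hnosub : ∀ m m' : Fin n, m ≠ m' → ¬ U m ⊆ U m')
    (halt : ∀ i : ℕ, i < n → ∃! m : Fin n, ∃ z : ℤ,
      extPts n a i < b m + z ∧ b m + z < extPts n a (i + 1)) :
    ∃ k < n, ∃ e : Fin n ≃ ZMod n, ∀ σ : Finset (Fin n),
      (⋂ m ∈ σ, U m).Nonempty ↔ IsFaceN n k (σ.image e) := by
  obtain rfl : U = fun m => ((↑) : ℝ → AddCircle (1 : ℝ)) '' Icc (a m) (b m) := funext hU
  have hab : ∀ m, a m < b m := fun m => (hlen m).1.lt_of_ne fun h => hanb m m (congrArg _ h)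
  have hba : ∀ m, b m < a m + 1 := fun m => (hlen m).2
  have hB := strictMono_extPts_of_not_subset hnosub hmono
  obtain ⟨k, hkn, hk⟩ := exists_extPts_shift hab hba hanb hmono hB (existsUnique_closesIn halt)
  exact ⟨k, hkn, (ZMod.finEquiv n).toEquiv, fun σ =>
    ⟨isFaceN_of_nonempty hba hmono hkn fun t => (hk t).2,
      nonempty_of_isFaceN hmono.monotone hB.monotone fun t => (hk t).1⟩⟩

/-- let `U` be a collection of `n` closed arcs in `S¹ = ℝ/ℤ`, with all `2n`
endpoints distinct, no arc contained in another, opening endpoints in clockwise cyclic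
order, and the endpoints alternating: between consecutive opening endpoints there is
exactly one closing endpoint. Then the nerve `N(U)` is isomorphic to `N(n,k)` for some
`0 ≤ k < n`. -/
theorem alternating_arcs_nerve_iso (n : ℕ) [NeZero n]
    (U : Fin n → Set (AddCircle (1 : ℝ))) (a b : Fin n → ℝ)
    (hU : ∀ m, U m = (fun x : ℝ => (x : AddCircle (1 : ℝ))) '' Icc (a m) (b m))
    (hlen : ∀ m, a m ≤ b m ∧ b m < a m + 1)
    (hmono : StrictMono (extPts n a))
    (hinja : Function.Injective fun m : Fin n => ((a m : ℝ) : AddCircle (1 : ℝ)))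
    (hinjb : Function.Injective fun m : Fin n => ((b m : ℝ) : AddCircle (1 : ℝ)))
    (hanb : ∀ m m' : Fin n, ((a m : ℝ) : AddCircle (1 : ℝ)) ≠ ((b m' : ℝ) : AddCircle (1 : ℝ)))
    (hnosub : ∀ m m' : Fin n, m ≠ m' → ¬ U m ⊆ U m')
    (halt : ∀ i : ℕ, i < n → ∃! m : Fin n, ∃ z : ℤ,
      extPts n a i < b m + z ∧ b m + z < extPts n a (i + 1)) :
    ∃ k < n, ∃ e : Fin n ≃ ZMod n, ∀ σ : Finset (Fin n),
      (⋂ m ∈ σ, U m).Nonempty ↔ IsFaceN n k (σ.image e) :=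
  alternating_arcs_nerve_iso_general n U a b hU hlen hmono hanb hnosub halt
end

section
/- If a vertex v of a finite simplicial complex K is dominated by a vertex v', then the inclusion of K \ {v} (the subcomplex induced on all vertices other than v) into K is a homotopy equivalence. -/
/-- The geometric realization of the simplicial complex with face predicate `F`. -/
def realizationSet {V : Type*} [Fintype V] (F : Finset V → Prop) : Set (V → ℝ) :=
  {f | (∀ v, 0 ≤ f v) ∧ (∑ v, f v = 1) ∧ ∃ σ : Finset V, F σ ∧ ∀ v, f v ≠ 0 → v ∈ σ}

/-!
Pushing the barycentric weight of `v` onto `v'` gives a map `r` that retracts `|K|` onto `|K \ {v}|`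
because a face containing `v` becomes, after replacing `v` by `v'`, a face of `K` (domination
and closure under subsets). Moreover a point `f` of `|K|` and its image `r f` always lie in one
closed simplex of `K` (namely `σ ∪ {v'}` if `f` lies in the simplex `σ ∋ v`), so the
straight-line homotopy from `r` to the identity stays inside `|K|`.
-/

open Finset

theorem ContinuousMap.homotopic_of_segment_subset {X E : Type*} [TopologicalSpace X]
    [AddCommGroup E] [TopologicalSpace E] [IsTopologicalAddGroup E] [Module ℝ E]
    [ContinuousSMul ℝ E] {S : Set E} {f g : C(X, S)}
    (h : ∀ x, segment ℝ (f x : E) (g x) ⊆ S) : f.Homotopic g := by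
  let val : C(S, E) := ⟨Subtype.val, continuous_subtype_val⟩
  let F := Homotopy.affine (val.comp f) (val.comp g)
  exact ⟨{ toFun := fun p => ⟨F p, h p.2 (lineMap_mem_segment ℝ _ _ p.1.2)⟩
           continuous_toFun := F.continuous.subtype_mk _
           map_zero_left := fun x => Subtype.ext (F.apply_zero x)
           map_one_left := fun x => Subtype.ext (F.apply_one x) }⟩

section Realization

variable {V : Type*} [Fintype V]

def closedSimplex (σ : Finset V) : Set (V → ℝ) :=
  stdSimplex ℝ V ∩ {f | ∀ w ∉ σ, f w = 0}

theorem mem_realizationSet_iff {F : Finset V → Prop} {f : V → ℝ} :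
    f ∈ realizationSet F ↔ ∃ σ, F σ ∧ f ∈ closedSimplex σ := by
  simp only [realizationSet, closedSimplex, stdSimplex, Set.mem_ofPred_eq, Set.mem_inter_iff,
    not_imp_comm (b := _ = (0 : ℝ))]
  tauto

theorem realizationSet_mono {F G : Finset V → Prop} (h : ∀ σ, F σ → G σ) :
    realizationSet F ⊆ realizationSet G := fun _ hf =>
  let ⟨σ, hσ, hf⟩ := mem_realizationSet_iff.1 hf
  mem_realizationSet_iff.2 ⟨σ, h σ hσ, hf⟩

theorem convex_closedSimplex (σ : Finset V) : Convex ℝ (closedSimplex σ) :=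
  (convex_stdSimplex ℝ V).inter fun f hf g hg a b _ _ _ w hw => by
    simp [hf w hw, hg w hw]

theorem closedSimplex_mono {σ τ : Finset V} (h : σ ⊆ τ) :
    closedSimplex σ ⊆ closedSimplex τ :=
  fun _ ⟨hf, hσ⟩ => ⟨hf, fun w hw => hσ w fun hwσ => hw (h hwσ)⟩

theorem mem_closedSimplex_erase [DecidableEq V] {σ : Finset V} {f : V → ℝ} {v : V}
    (hf : f ∈ closedSimplex σ) (hv : f v = 0) : f ∈ closedSimplex (σ.erase v) := by
  refine ⟨hf.1, fun w hw => ?_⟩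
  by_cases hwv : w = v
  · rwa [hwv]
  · exact hf.2 w fun hwσ => hw (mem_erase.2 ⟨hwv, hwσ⟩)

end Realization

section PushMass

variable {V : Type*} [DecidableEq V] (v v' : V)

def pushMass (f : V → ℝ) : V → ℝ :=
  fun w => if w = v then 0 else if w = v' then f v' + f v else f w

theorem continuous_pushMass : Continuous (pushMass v v') :=
  continuous_pi fun w => by unfold pushMass; split_ifs <;> fun_prop

@[simp]
theorem pushMass_apply_self (f : V → ℝ) : pushMass v v' f v = 0 := if_pos rfl

theorem pushMass_eq_self {f : V → ℝ} (hf : f v = 0) : pushMass v v' f = f := by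
  funext w
  unfold pushMass
  split_ifs <;> simp_all

variable {v v'}

theorem sum_pushMass [Fintype V] (hne : v' ≠ v) (f : V → ℝ) :
    ∑ w, pushMass v v' f w = ∑ w, f w := by
  have hpush : ∀ w, pushMass v v' f w
      = f w + (if w = v' then f v else 0) - (if w = v then f v else 0) := by
    intro w
    unfold pushMass
    split_ifs <;> simp_all
  simp only [hpush, sum_sub_distrib, sum_add_distrib, sum_ite_eq', mem_univ, if_true,
    add_sub_cancel_right]

theorem pushMass_mem_closedSimplex_insert [Fintype V] (hne : v' ≠ v) {σ : Finset V}
    {f : V → ℝ} (hf : f ∈ closedSimplex σ) :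
    pushMass v v' f ∈ closedSimplex (insert v' σ) := by
  obtain ⟨⟨hpos, hsum⟩, hσ⟩ := hf
  refine ⟨⟨fun w => ?_, (sum_pushMass hne f).trans hsum⟩, fun w hw => ?_⟩
  · unfold pushMass
    split_ifs
    exacts [le_rfl, add_nonneg (hpos v') (hpos v), hpos w]
  · obtain ⟨hwv', hwσ⟩ : w ≠ v' ∧ w ∉ σ := by simpa using hw
    simp [pushMass, hwv', hσ w hwσ]

end PushMass

section Domination

variable {V : Type*} [Fintype V] [DecidableEq V] {K : Finset V → Prop} {v v' : V}

theorem exists_face_mem_closedSimplex_pushMass (hne : v' ≠ v)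
    (hdom : ∀ σ : Finset V, K σ → v ∈ σ → K (insert v' σ)) {f : V → ℝ}
    (hf : f ∈ realizationSet K) :
    ∃ τ, K τ ∧ f ∈ closedSimplex τ ∧ pushMass v v' f ∈ closedSimplex τ := by
  obtain ⟨σ, hσ, hfσ⟩ := mem_realizationSet_iff.1 hf
  by_cases hv : v ∈ σ
  · exact ⟨insert v' σ, hdom σ hσ hv, closedSimplex_mono (subset_insert _ _) hfσ,
      pushMass_mem_closedSimplex_insert hne hfσ⟩
  · rw [pushMass_eq_self v v' (hfσ.2 v hv)]
    exact ⟨σ, hσ, hfσ, hfσ⟩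

theorem pushMass_mem_realizationSet_deleteVertex
    (hdown : ∀ σ τ : Finset V, K σ → τ ⊆ σ → K τ) (hne : v' ≠ v)
    (hdom : ∀ σ : Finset V, K σ → v ∈ σ → K (insert v' σ)) {f : V → ℝ}
    (hf : f ∈ realizationSet K) :
    pushMass v v' f ∈ realizationSet (fun σ : Finset V => K σ ∧ v ∉ σ) := by
  obtain ⟨τ, hτ, -, hrτ⟩ := exists_face_mem_closedSimplex_pushMass hne hdom hf
  exact mem_realizationSet_iff.2 ⟨τ.erase v, ⟨hdown τ _ hτ (erase_subset v τ),
    notMem_erase v τ⟩, mem_closedSimplex_erase hrτ (pushMass_apply_self v v' f)⟩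

theorem segment_pushMass_subset_realizationSet (hne : v' ≠ v)
    (hdom : ∀ σ : Finset V, K σ → v ∈ σ → K (insert v' σ)) {f : V → ℝ}
    (hf : f ∈ realizationSet K) : segment ℝ (pushMass v v' f) f ⊆ realizationSet K := by
  obtain ⟨τ, hτ, hfτ, hrτ⟩ := exists_face_mem_closedSimplex_pushMass hne hdom hf
  exact fun g hg => mem_realizationSet_iff.2
    ⟨τ, hτ, (convex_closedSimplex τ).segment_subset hrτ hfτ hg⟩

end Domination

/-- if a vertex `v` of a finite simplicial complex `K` is dominated by a
vertex `v'`, then the inclusion of `K \ {v}` (the induced subcomplex on the remaining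
vertices) into `K` is a homotopy equivalence: there is a homotopy equivalence whose
underlying map is the inclusion. -/
theorem dominated_removal_homotopyEquiv {V : Type*} [Fintype V] [DecidableEq V]
    (K : Finset V → Prop)
    (hdown : ∀ σ τ : Finset V, K σ → τ ⊆ σ → K τ)
    (v v' : V) (hne : v' ≠ v)
    (hdom : ∀ σ : Finset V, K σ → v ∈ σ → K (insert v' σ)) :
    ∃ h : ContinuousMap.HomotopyEquiv
        (realizationSet (fun σ : Finset V => K σ ∧ v ∉ σ)) (realizationSet K),
      ∀ x : realizationSet (fun σ : Finset V => K σ ∧ v ∉ σ),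
        ((h.toFun x : V → ℝ)) = (x : V → ℝ) := by
  let incl : C(realizationSet (fun σ : Finset V => K σ ∧ v ∉ σ), realizationSet K) :=
    ⟨Set.inclusion (realizationSet_mono fun _ => And.left), continuous_inclusion _⟩
  let retr : C(realizationSet K, realizationSet (fun σ : Finset V => K σ ∧ v ∉ σ)) :=
    ⟨fun f => ⟨pushMass v v' f, pushMass_mem_realizationSet_deleteVertex hdown hne hdom f.2⟩,
      ((continuous_pushMass v v').comp continuous_subtype_val).subtype_mk _⟩
  have hretr_incl : retr.comp incl = ContinuousMap.id _ := by
    ext f : 2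
    obtain ⟨σ, ⟨-, hvσ⟩, hfσ⟩ := mem_realizationSet_iff.1 f.2
    exact pushMass_eq_self v v' (hfσ.2 v hvσ)
  have hincl_retr : (incl.comp retr).Homotopic (ContinuousMap.id _) :=
    ContinuousMap.homotopic_of_segment_subset fun f =>
      segment_pushMass_subset_realizationSet hne hdom f.2
  exact ⟨⟨incl, retr, hretr_incl ▸ .refl _, hincl_retr⟩, fun _ => rfl⟩
end
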